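/- arXiv:2309.09532 — 6 statements merged into one kernel-verified Lean document; each statement's English description precedes it below -/
import Mathlib

section
/- For real numbers a and b and p ≥ 2, one has |(a+b)/2|^p + |(a-b)/2|^p ≤ (|a|^p + |b|^p)/2. -/
/-!
Write `|x| ^ p = (x ^ 2) ^ q` with `q = p / 2 ≥ 1`. Since `t ↦ t ^ q` is superadditive on `[0, ∞)`,
the left-hand side is at most `(((a + b) / 2) ^ 2 + ((a - b) / 2) ^ 2) ^ q`, which by the
parallelogram identity is `((a ^ 2 + b ^ 2) / 2) ^ q`; convexity of `t ↦ t ^ q` bounds this by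
`((a ^ 2) ^ q + (b ^ 2) ^ q) / 2`.
-/

open Real

lemma abs_rpow_eq_sq_rpow_div_two (x p : ℝ) : |x| ^ p = (x ^ 2) ^ (p / 2) := by
  rw [← sq_abs, ← rpow_natCast_mul (abs_nonneg x), Nat.cast_ofNat, mul_div_cancel₀ p two_ne_zero]

lemma rpow_add_div_two_le {x y p : ℝ} (hx : 0 ≤ x) (hy : 0 ≤ y) (hp : 1 ≤ p) :
    ((x + y) / 2) ^ p ≤ (x ^ p + y ^ p) / 2 := by
  have h := (convexOn_rpow hp).2 hx hy (by norm_num : (0 : ℝ) ≤ 1 / 2)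
    (by norm_num : (0 : ℝ) ≤ 1 / 2) (add_halves 1)
  simp only [smul_eq_mul] at h
  calc ((x + y) / 2) ^ p = (1 / 2 * x + 1 / 2 * y) ^ p := by ring_nf
    _ ≤ 1 / 2 * x ^ p + 1 / 2 * y ^ p := h
    _ = (x ^ p + y ^ p) / 2 := by ring

lemma sq_add_div_two_add_sq_sub_div_two (a b : ℝ) :
    ((a + b) / 2) ^ 2 + ((a - b) / 2) ^ 2 = (a ^ 2 + b ^ 2) / 2 := by
  ring

theorem clarkson_type (p a b : ℝ) (hp : 2 ≤ p) :
    |(a + b) / 2| ^ p + |(a - b) / 2| ^ p ≤ (|a| ^ p + |b| ^ p) / 2 := by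
  have hq : 1 ≤ p / 2 := by linarith
  simp only [abs_rpow_eq_sq_rpow_div_two]
  calc (((a + b) / 2) ^ 2) ^ (p / 2) + (((a - b) / 2) ^ 2) ^ (p / 2)
      ≤ (((a + b) / 2) ^ 2 + ((a - b) / 2) ^ 2) ^ (p / 2) :=
        add_rpow_le_rpow_add (sq_nonneg _) (sq_nonneg _) hq
    _ = ((a ^ 2 + b ^ 2) / 2) ^ (p / 2) := by rw [sq_add_div_two_add_sq_sub_div_two]
    _ ≤ ((a ^ 2) ^ (p / 2) + (b ^ 2) ^ (p / 2)) / 2 :=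
        rpow_add_div_two_le (sq_nonneg a) (sq_nonneg b) hq
end

section
/- The function α(r,s) = |r^{1/p} - s^{1/p}|^p is convex on (0,∞) × (0,∞); in particular, for positive reals r₁, r₂, s₁, s₂ one has α((r₁+r₂)/2, (s₁+s₂)/2) ≤ (1/2)α(r₁,s₁) + (1/2)α(r₂,s₂), with equality only if r₁ s₂ = r₂ s₁. -/
open Set

/-!
With `a = r ^ (1/p)`, `b = s ^ (1/p)`, `α` becomes `|a - b| ^ p`. Fix `(r₀, s₀)` with roots
`a₀ > b₀` (`α` is symmetric, and for `a₀ = b₀` the zero functional supports `α`). Splitting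
`a = (a - b) + b` against `a₀ = (a₀ - b₀) + b₀` in Radon's inequality (subadditivity of the
perspective `t |x / t| ^ p` of the strictly convex `|x| ^ p`) gives
`a₀ (a/a₀)^p ≤ (a₀ - b₀) |(a - b)/(a₀ - b₀)|^p + b₀ (b/b₀)^p`: a linear function of
`(r, s) = (a^p, b^p)` below `α`, touching it at `(r₀, s₀)` and, by strictness, only on the ray
through `(r₀, s₀)`. A supporting line at every point gives convexity and the equality case.
-/

section Perspective

variable {E : Type*} [AddCommGroup E] [Module ℝ E]

noncomputable def perspective (f : E → ℝ) (t : ℝ) (x : E) : ℝ :=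
  t * f (t⁻¹ • x)

lemma inv_add_smul_add_eq {t₁ t₂ : ℝ} (ht₁ : 0 < t₁) (ht₂ : 0 < t₂) (x₁ x₂ : E) :
    (t₁ + t₂)⁻¹ • (x₁ + x₂) = (t₁ / (t₁ + t₂)) • t₁⁻¹ • x₁ + (t₂ / (t₁ + t₂)) • t₂⁻¹ • x₂ := by
  rw [smul_add, smul_smul, smul_smul]
  congr 2 <;> field_simp

theorem ConvexOn.perspective_add_le {s : Set E} {f : E → ℝ} (hf : ConvexOn ℝ s f)
    {t₁ t₂ : ℝ} (ht₁ : 0 < t₁) (ht₂ : 0 < t₂) {x₁ x₂ : E} (hx₁ : t₁⁻¹ • x₁ ∈ s)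
    (hx₂ : t₂⁻¹ • x₂ ∈ s) :
    perspective f (t₁ + t₂) (x₁ + x₂) ≤ perspective f t₁ x₁ + perspective f t₂ x₂ := by
  have ht : 0 < t₁ + t₂ := add_pos ht₁ ht₂
  have h := hf.2 hx₁ hx₂ (div_pos ht₁ ht).le (div_pos ht₂ ht).le (by field_simp)
  rw [← inv_add_smul_add_eq ht₁ ht₂, smul_eq_mul, smul_eq_mul] at h
  calc perspective f (t₁ + t₂) (x₁ + x₂)
      ≤ (t₁ + t₂) * (t₁ / (t₁ + t₂) * f (t₁⁻¹ • x₁) + t₂ / (t₁ + t₂) * f (t₂⁻¹ • x₂)) :=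
        mul_le_mul_of_nonneg_left h ht.le
    _ = perspective f t₁ x₁ + perspective f t₂ x₂ := by
        unfold perspective; field_simp

theorem StrictConvexOn.perspective_add_lt {s : Set E} {f : E → ℝ} (hf : StrictConvexOn ℝ s f)
    {t₁ t₂ : ℝ} (ht₁ : 0 < t₁) (ht₂ : 0 < t₂) {x₁ x₂ : E} (hx₁ : t₁⁻¹ • x₁ ∈ s)
    (hx₂ : t₂⁻¹ • x₂ ∈ s) (hne : t₁⁻¹ • x₁ ≠ t₂⁻¹ • x₂) :
    perspective f (t₁ + t₂) (x₁ + x₂) < perspective f t₁ x₁ + perspective f t₂ x₂ := by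
  have ht : 0 < t₁ + t₂ := add_pos ht₁ ht₂
  have h := hf.2 hx₁ hx₂ hne (div_pos ht₁ ht) (div_pos ht₂ ht) (by field_simp)
  rw [← inv_add_smul_add_eq ht₁ ht₂, smul_eq_mul, smul_eq_mul] at h
  calc perspective f (t₁ + t₂) (x₁ + x₂)
      < (t₁ + t₂) * (t₁ / (t₁ + t₂) * f (t₁⁻¹ • x₁) + t₂ / (t₁ + t₂) * f (t₂⁻¹ • x₂)) :=
        mul_lt_mul_of_pos_left h ht
    _ = perspective f t₁ x₁ + perspective f t₂ x₂ := by
        unfold perspective; field_simp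

end Perspective

theorem strictConvexOn_abs_rpow {p : ℝ} (hp : 1 < p) :
    StrictConvexOn ℝ univ fun x : ℝ => |x| ^ p := by
  refine ⟨convex_univ, fun x _ y _ hxy a b ha hb hab => ?_⟩
  simp only [smul_eq_mul]
  have htri : |a * x + b * y| ≤ a * |x| + b * |y| := by
    simpa only [abs_mul, abs_of_pos ha, abs_of_pos hb] using abs_add_le (a * x) (b * y)
  by_cases habs : |x| = |y|
  · -- then `y = -x ≠ 0`, and the triangle inequality is strict
    obtain rfl : y = -x := by
      rcases abs_eq_abs.mp habs with h | h
      exacts [absurd h hxy, by linarith]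
    have hx : 0 < |x| := abs_pos.mpr fun h => hxy (by simp [h])
    have hlt : |a * x + b * -x| < a * |x| + b * |-x| := by
      have hab' : |a - b| < a + b := abs_sub_lt_iff.mpr ⟨by linarith, by linarith⟩
      rw [show a * x + b * -x = (a - b) * x by ring, abs_mul, abs_neg, ← add_mul]
      exact mul_lt_mul_of_pos_right hab' hx
    have h := (convexOn_rpow hp.le).2 (abs_nonneg x) (abs_nonneg (-x)) ha.le hb.le hab
    simp only [smul_eq_mul] at h
    exact (Real.rpow_lt_rpow (abs_nonneg _) hlt (by linarith)).trans_le h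
  · have h := (strictConvexOn_rpow hp).2 (abs_nonneg x) (abs_nonneg y) habs ha hb hab
    simp only [smul_eq_mul] at h
    exact (Real.rpow_le_rpow (abs_nonneg _) htri (by linarith)).trans_lt h

lemma perspective_abs_rpow (p : ℝ) {t : ℝ} (ht : 0 ≤ t) (x : ℝ) :
    perspective (fun x : ℝ => |x| ^ p) t x = t * |x| ^ p / t ^ p := by
  simp only [perspective, smul_eq_mul, abs_mul, abs_inv, abs_of_nonneg ht,
    Real.mul_rpow (inv_nonneg.mpr ht) (abs_nonneg x), Real.inv_rpow ht]
  ring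

theorem radon_abs_rpow {p : ℝ} (hp : 1 < p) {t₁ t₂ : ℝ} (ht₁ : 0 < t₁) (ht₂ : 0 < t₂)
    (x₁ x₂ : ℝ) :
    (t₁ + t₂) * |x₁ + x₂| ^ p / (t₁ + t₂) ^ p ≤ t₁ * |x₁| ^ p / t₁ ^ p + t₂ * |x₂| ^ p / t₂ ^ p ∧
      ((t₁ + t₂) * |x₁ + x₂| ^ p / (t₁ + t₂) ^ p =
          t₁ * |x₁| ^ p / t₁ ^ p + t₂ * |x₂| ^ p / t₂ ^ p →
        x₁ * t₂ = x₂ * t₁) := by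
  have hf := strictConvexOn_abs_rpow hp
  rw [← perspective_abs_rpow p (add_pos ht₁ ht₂).le, ← perspective_abs_rpow p ht₁.le,
    ← perspective_abs_rpow p ht₂.le]
  refine ⟨hf.convexOn.perspective_add_le ht₁ ht₂ (mem_univ _) (mem_univ _), fun heq => ?_⟩
  by_contra hne
  refine (hf.perspective_add_lt ht₁ ht₂ (mem_univ _) (mem_univ _) fun hray => hne ?_).ne heq
  rw [smul_eq_mul, smul_eq_mul] at hray
  field_simp at hray
  linarith

noncomputable def alpha (p r s : ℝ) : ℝ :=
  |r ^ (1 / p) - s ^ (1 / p)| ^ p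

section Alpha

variable {p : ℝ}

lemma alpha_comm (p r s : ℝ) : alpha p r s = alpha p s r := by
  rw [alpha, alpha, abs_sub_comm]

def IsAlphaSupport (p r₀ s₀ A B : ℝ) : Prop :=
  A * r₀ + B * s₀ = alpha p r₀ s₀ ∧
    ∀ r s, 0 < r → 0 < s →
      A * r + B * s ≤ alpha p r s ∧ (A * r + B * s = alpha p r s → r * s₀ = r₀ * s)

lemma IsAlphaSupport.swap {r₀ s₀ A B : ℝ} (h : IsAlphaSupport p r₀ s₀ A B) :
    IsAlphaSupport p s₀ r₀ B A := by
  refine ⟨by rw [alpha_comm, ← h.1]; ring, fun r s hr hs => ?_⟩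
  obtain ⟨hle, heq⟩ := h.2 s r hs hr
  rw [alpha_comm]
  exact ⟨by linarith, fun e => by linear_combination -heq (by linarith)⟩

lemma isAlphaSupport_self (hp : p ≠ 0) (r₀ : ℝ) : IsAlphaSupport p r₀ r₀ 0 0 := by
  refine ⟨by simp [alpha, Real.zero_rpow hp], fun r s hr hs =>
    ⟨by rw [zero_mul, zero_mul, add_zero]; exact Real.rpow_nonneg (abs_nonneg _) p, fun h => ?_⟩⟩
  have hrs : r ^ (1 / p) = s ^ (1 / p) := by
    rw [alpha, zero_mul, zero_mul, add_zero, eq_comm, Real.rpow_eq_zero (abs_nonneg _) hp,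
      abs_eq_zero, sub_eq_zero] at h
    exact h
  rw [(Real.rpow_left_inj hr.le hs.le (one_div_ne_zero hp)).mp hrs, mul_comm]

lemma alpha_rpow (hp : p ≠ 0) {a b : ℝ} (ha : 0 ≤ a) (hb : 0 ≤ b) :
    alpha p (a ^ p) (b ^ p) = |a - b| ^ p := by
  rw [alpha, one_div, Real.rpow_rpow_inv ha hp, Real.rpow_rpow_inv hb hp]

lemma exists_rpow_eq (hp : p ≠ 0) {r : ℝ} (hr : 0 < r) : ∃ a, 0 < a ∧ a ^ p = r :=
  ⟨r ^ (1 / p), by positivity, by rw [one_div, Real.rpow_inv_rpow hr.le hp]⟩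

lemma isAlphaSupport_of_lt (hp : 1 < p) {a₀ b₀ : ℝ} (hb₀ : 0 < b₀) (h : b₀ < a₀) :
    IsAlphaSupport p (a₀ ^ p) (b₀ ^ p) ((a₀ - b₀) ^ p / (a₀ - b₀) * (a₀ / a₀ ^ p))
      (-((a₀ - b₀) ^ p / (a₀ - b₀) * (b₀ / b₀ ^ p))) := by
  have hp0 : p ≠ 0 := by positivity
  have ha₀ : 0 < a₀ := hb₀.trans h
  have hc : 0 < a₀ - b₀ := sub_pos.mpr h
  refine ⟨?_, fun r s hr hs => ?_⟩
  · rw [alpha_rpow hp0 ha₀.le hb₀.le, abs_of_pos hc]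
    field_simp
    ring
  obtain ⟨a, ha, rfl⟩ := exists_rpow_eq hp0 hr
  obtain ⟨b, hb, rfl⟩ := exists_rpow_eq hp0 hs
  obtain ⟨hle, heq⟩ := radon_abs_rpow hp hc hb₀ (a - b) b
  simp only [sub_add_cancel, abs_of_pos ha, abs_of_pos hb] at hle heq
  rw [alpha_rpow hp0 ha.le hb.le]
  set k := (a₀ - b₀) ^ p / (a₀ - b₀) with hk_def
  have hk : 0 < k := by positivity
  have hsupp : k * (a₀ / a₀ ^ p) * a ^ p + -(k * (b₀ / b₀ ^ p)) * b ^ p =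
      k * (a₀ * a ^ p / a₀ ^ p - b₀ * b ^ p / b₀ ^ p) := by ring
  have hα : |a - b| ^ p = k * ((a₀ - b₀) * |a - b| ^ p / (a₀ - b₀) ^ p) := by
    rw [hk_def]
    field_simp
  rw [hsupp, hα]
  refine ⟨mul_le_mul_of_nonneg_left (by linarith) hk.le, fun htouch => ?_⟩
  have hray := heq (by linarith [mul_left_cancel₀ hk.ne' htouch])
  rw [← Real.mul_rpow ha.le hb₀.le, ← Real.mul_rpow ha₀.le hb.le]
  congr 1
  linarith

lemma exists_isAlphaSupport (hp : 1 < p) {r₀ s₀ : ℝ} (hr₀ : 0 < r₀) (hs₀ : 0 < s₀) :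
    ∃ A B, IsAlphaSupport p r₀ s₀ A B := by
  have hp0 : p ≠ 0 := by positivity
  obtain ⟨a₀, ha₀, rfl⟩ := exists_rpow_eq hp0 hr₀
  obtain ⟨b₀, hb₀, rfl⟩ := exists_rpow_eq hp0 hs₀
  rcases lt_trichotomy b₀ a₀ with h | rfl | h
  · exact ⟨_, _, isAlphaSupport_of_lt hp hb₀ h⟩
  · exact ⟨0, 0, isAlphaSupport_self hp0 _⟩
  · exact ⟨_, _, (isAlphaSupport_of_lt hp ha₀ h).swap⟩

variable {a b r₁ r₂ s₁ s₂ : ℝ}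

lemma alpha_mul_add_mul_le (hp : 1 < p) (ha : 0 < a) (hb : 0 < b) (hr₁ : 0 < r₁) (hr₂ : 0 < r₂)
    (hs₁ : 0 < s₁) (hs₂ : 0 < s₂) :
    alpha p (a * r₁ + b * r₂) (a * s₁ + b * s₂) ≤ a * alpha p r₁ s₁ + b * alpha p r₂ s₂ := by
  obtain ⟨A, B, htouch, hsupp⟩ :=
    exists_isAlphaSupport hp (r₀ := a * r₁ + b * r₂) (s₀ := a * s₁ + b * s₂) (by positivity)
      (by positivity)
  have h₁ := mul_le_mul_of_nonneg_left (hsupp r₁ s₁ hr₁ hs₁).1 ha.le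
  have h₂ := mul_le_mul_of_nonneg_left (hsupp r₂ s₂ hr₂ hs₂).1 hb.le
  linarith

lemma mul_eq_mul_of_alpha_mul_add_mul_eq (hp : 1 < p) (ha : 0 < a) (hb : 0 < b) (hr₁ : 0 < r₁)
    (hr₂ : 0 < r₂) (hs₁ : 0 < s₁) (hs₂ : 0 < s₂)
    (h : alpha p (a * r₁ + b * r₂) (a * s₁ + b * s₂) = a * alpha p r₁ s₁ + b * alpha p r₂ s₂) :
    r₁ * s₂ = r₂ * s₁ := by
  obtain ⟨A, B, htouch, hsupp⟩ :=
    exists_isAlphaSupport hp (r₀ := a * r₁ + b * r₂) (s₀ := a * s₁ + b * s₂) (by positivity)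
      (by positivity)
  obtain ⟨hle₁, heq₁⟩ := hsupp r₁ s₁ hr₁ hs₁
  have h₂ := mul_le_mul_of_nonneg_left (hsupp r₂ s₂ hr₂ hs₂).1 hb.le
  have htouch₁ : A * r₁ + B * s₁ = alpha p r₁ s₁ := by
    by_contra hne
    have h₁ := mul_lt_mul_of_pos_left (lt_of_le_of_ne hle₁ hne) ha
    linarith
  exact mul_left_cancel₀ hb.ne' (by linear_combination heq₁ htouch₁)

lemma convexOn_alpha (hp : 1 < p) :
    ConvexOn ℝ (Ioi 0 ×ˢ Ioi 0) fun rs : ℝ × ℝ => alpha p rs.1 rs.2 :=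
  convexOn_iff_forall_pos.mpr ⟨(convex_Ioi 0).prod (convex_Ioi 0),
    fun _ hx _ hy _ _ ha hb _ => alpha_mul_add_mul_le hp ha hb hx.1 hy.1 hx.2 hy.2⟩

end Alpha

theorem alpha_convex (p : ℝ) (hp : 1 < p) :
    ConvexOn ℝ (Ioi (0 : ℝ) ×ˢ Ioi (0 : ℝ))
      (fun rs : ℝ × ℝ => |rs.1 ^ (1 / p) - rs.2 ^ (1 / p)| ^ p) ∧
    ∀ r₁ r₂ s₁ s₂ : ℝ, 0 < r₁ → 0 < r₂ → 0 < s₁ → 0 < s₂ →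
      (|((r₁ + r₂) / 2) ^ (1 / p) - ((s₁ + s₂) / 2) ^ (1 / p)| ^ p ≤
        (1 / 2) * |r₁ ^ (1 / p) - s₁ ^ (1 / p)| ^ p
          + (1 / 2) * |r₂ ^ (1 / p) - s₂ ^ (1 / p)| ^ p) ∧
      (|((r₁ + r₂) / 2) ^ (1 / p) - ((s₁ + s₂) / 2) ^ (1 / p)| ^ p =
        (1 / 2) * |r₁ ^ (1 / p) - s₁ ^ (1 / p)| ^ p
          + (1 / 2) * |r₂ ^ (1 / p) - s₂ ^ (1 / p)| ^ p →
        r₁ * s₂ = r₂ * s₁) := by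
  refine ⟨convexOn_alpha hp, fun r₁ r₂ s₁ s₂ hr₁ hr₂ hs₁ hs₂ => ?_⟩
  have hmid : ∀ x y : ℝ, (x + y) / 2 = 1 / 2 * x + 1 / 2 * y := fun x y => by ring
  simp only [hmid]
  exact ⟨alpha_mul_add_mul_le hp one_half_pos one_half_pos hr₁ hr₂ hs₁ hs₂,
    mul_eq_mul_of_alpha_mul_add_mul_eq hp one_half_pos one_half_pos hr₁ hr₂ hs₁ hs₂⟩
end

section
/- For 1 < p < 2, the function f(x) = (1+x)^p / (1+x^p) is strictly increasing on the interval (0,1). -/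
theorem strict_mono_ratio (p : ℝ) (hp1 : 1 < p) (hp2 : p < 2) :
    StrictMonoOn (fun x : ℝ => (1 + x) ^ p / (1 + x ^ p)) (Set.Ioo 0 1) := by
  have key : ∀ x ∈ Set.Ioo (0:ℝ) 1,
      HasDerivAt (fun x : ℝ => (1 + x) ^ p / (1 + x ^ p))
        ((1 * p * (1 + x) ^ (p - 1) * (1 + x ^ p) -
          (1 + x) ^ p * (1 * p * x ^ (p - 1))) / (1 + x ^ p) ^ 2) x := by
    intro x hx
    obtain ⟨hx0, hx1⟩ := hx
    have h1x : (0:ℝ) < 1 + x := by linarith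
    have hxp : (0:ℝ) < x ^ p := Real.rpow_pos_of_pos hx0 p
    have hg : HasDerivAt (fun x : ℝ => (1 + x) ^ p) (1 * p * (1 + x) ^ (p - 1)) x := by
      have := ((hasDerivAt_id x).const_add 1).rpow_const (p := p) (Or.inl h1x.ne')
      simpa using this
    have hh : HasDerivAt (fun x : ℝ => 1 + x ^ p) (1 * p * x ^ (p - 1)) x := by
      have := ((hasDerivAt_id x).rpow_const (p := p) (Or.inl hx0.ne')).const_add 1
      simpa using this
    exact hg.div hh (by positivity)
  apply strictMonoOn_of_deriv_pos (convex_Ioo 0 1)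
  · exact fun x hx => (key x hx).continuousAt.continuousWithinAt
  · intro x hx
    rw [interior_Ioo] at hx
    rw [(key x hx).deriv]
    obtain ⟨hx0, hx1⟩ := hx
    have h1x : (0:ℝ) < 1 + x := by linarith
    have hp0 : (0:ℝ) < p := by linarith
    have hxp : (0:ℝ) < x ^ p := Real.rpow_pos_of_pos hx0 p
    have hnum : 1 * p * (1 + x) ^ (p - 1) * (1 + x ^ p) -
        (1 + x) ^ p * (1 * p * x ^ (p - 1)) =
        p * (1 + x) ^ (p - 1) * (1 - x ^ (p - 1)) := by
      have e1 : (1 + x) ^ p = (1 + x) ^ (p - 1) * (1 + x) := by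
        rw [← Real.rpow_add_one h1x.ne']; ring_nf
      have hxx : x * x ^ (p - 1) = x ^ p := by
        nth_rewrite 1 [← Real.rpow_one x]
        rw [← Real.rpow_add hx0]; ring_nf
      rw [e1]
      linear_combination (-(p * (1 + x) ^ (p - 1))) * hxx
    rw [hnum]
    have hlt : x ^ (p - 1) < 1 := Real.rpow_lt_one hx0.le hx1 (by linarith)
    have : (0:ℝ) < p * (1 + x) ^ (p - 1) * (1 - x ^ (p - 1)) :=
      mul_pos (mul_pos hp0 (Real.rpow_pos_of_pos h1x (p - 1))) (by linarith)
    exact div_pos this (by positivity)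
end

section
/- (Discrete Picone inequality) Let p ∈ (1,∞) and let u, v : ℝ^N → ℝ with u ≥ 0 and v > 0. Then for all x, y, K(u,v)(x,y) := |u(x)-u(y)|^p - |v(x)-v(y)|^{p-2}(v(x)-v(y)) ( u(x)^p / v(x)^{p-1} - u(y)^p / v(y)^{p-1} ) ≥ 0. -/
/-!
The map `(x, y) ↦ x ^ p / y ^ (p - 1)` is the perspective of the convex function `x ↦ x ^ p`,
hence it is subadditive on `[0, ∞) × (0, ∞)`. Write `a, b, s, t` for `u x, u y, v x, v y`.
For `b ≤ a` and `t < s`, splitting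
`(a, s) = (a - b, s - t) + (b, t)` gives
`a ^ p / s ^ (p - 1) - b ^ p / t ^ (p - 1) ≤ (a - b) ^ p / (s - t) ^ (p - 1)`,
which is the Picone inequality after multiplying by `(s - t) ^ (p - 1)`. For `a ≤ b` the
left-hand side is already nonpositive, the case `s = t` is trivial, and the case `s < t` follows
by exchanging the two points.
-/

open Real

lemma mul_div_rpow_eq_rpow_div_rpow_sub_one {p x y : ℝ} (hx : 0 ≤ x) (hy : 0 < y) :
    y * (x / y) ^ p = x ^ p / y ^ (p - 1) := by
  rw [div_rpow hx hy.le, rpow_sub_one hy.ne']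
  field_simp

lemma rpow_add_div_rpow_add_le {p x₁ x₂ y₁ y₂ : ℝ} (hp : 1 ≤ p) (hx₁ : 0 ≤ x₁) (hx₂ : 0 ≤ x₂)
    (hy₁ : 0 < y₁) (hy₂ : 0 < y₂) :
    (x₁ + x₂) ^ p / (y₁ + y₂) ^ (p - 1) ≤ x₁ ^ p / y₁ ^ (p - 1) + x₂ ^ p / y₂ ^ (p - 1) := by
  have hy : 0 < y₁ + y₂ := add_pos hy₁ hy₂
  have hconv := (convexOn_rpow hp).2 (Set.mem_Ici.2 (div_nonneg hx₁ hy₁.le))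
    (Set.mem_Ici.2 (div_nonneg hx₂ hy₂.le)) (div_pos hy₁ hy).le (div_pos hy₂ hy).le
    (by field_simp)
  simp only [smul_eq_mul] at hconv
  calc (x₁ + x₂) ^ p / (y₁ + y₂) ^ (p - 1)
      = (y₁ + y₂) * ((x₁ + x₂) / (y₁ + y₂)) ^ p :=
        (mul_div_rpow_eq_rpow_div_rpow_sub_one (by positivity) hy).symm
    _ = (y₁ + y₂) * (y₁ / (y₁ + y₂) * (x₁ / y₁) + y₂ / (y₁ + y₂) * (x₂ / y₂)) ^ p := by
        field_simp
    _ ≤ (y₁ + y₂) * (y₁ / (y₁ + y₂) * (x₁ / y₁) ^ p + y₂ / (y₁ + y₂) * (x₂ / y₂) ^ p) :=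
        mul_le_mul_of_nonneg_left hconv hy.le
    _ = y₁ * (x₁ / y₁) ^ p + y₂ * (x₂ / y₂) ^ p := by field_simp
    _ = x₁ ^ p / y₁ ^ (p - 1) + x₂ ^ p / y₂ ^ (p - 1) := by
        rw [mul_div_rpow_eq_rpow_div_rpow_sub_one hx₁ hy₁,
          mul_div_rpow_eq_rpow_div_rpow_sub_one hx₂ hy₂]

lemma rpow_sub_mul_sub_le_abs_sub_rpow {p a b s t : ℝ} (hp : 1 ≤ p) (ha : 0 ≤ a) (hb : 0 ≤ b)
    (ht : 0 < t) (hts : t < s) :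
    (s - t) ^ (p - 1) * (a ^ p / s ^ (p - 1) - b ^ p / t ^ (p - 1)) ≤ |a - b| ^ p := by
  have hst : 0 < s - t := sub_pos.2 hts
  rcases le_total a b with hab | hba
  · have hquot : a ^ p / s ^ (p - 1) ≤ b ^ p / t ^ (p - 1) :=
      div_le_div₀ (rpow_nonneg hb p) (rpow_le_rpow ha hab (by linarith)) (rpow_pos_of_pos ht _)
        (rpow_le_rpow ht.le hts.le (by linarith))
    exact (mul_nonpos_of_nonneg_of_nonpos (rpow_nonneg hst.le _) (sub_nonpos.2 hquot)).trans
      (rpow_nonneg (abs_nonneg _) _)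
  · have hsub := rpow_add_div_rpow_add_le hp (sub_nonneg.2 hba) hb hst ht
    rw [sub_add_cancel, sub_add_cancel] at hsub
    rw [abs_of_nonneg (sub_nonneg.2 hba)]
    calc (s - t) ^ (p - 1) * (a ^ p / s ^ (p - 1) - b ^ p / t ^ (p - 1))
        ≤ (s - t) ^ (p - 1) * ((a - b) ^ p / (s - t) ^ (p - 1)) :=
          mul_le_mul_of_nonneg_left (by linarith) (rpow_nonneg hst.le _)
      _ = (a - b) ^ p := mul_div_cancel₀ _ (rpow_pos_of_pos hst _).ne'

lemma abs_rpow_sub_two_mul_self_of_pos {p d : ℝ} (hd : 0 < d) : |d| ^ (p - 2) * d = d ^ (p - 1) := by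
  rw [abs_of_pos hd, ← rpow_add_one hd.ne']
  ring_nf

noncomputable def piconeKernel (p a b s t : ℝ) : ℝ :=
  |a - b| ^ p - |s - t| ^ (p - 2) * (s - t) * (a ^ p / s ^ (p - 1) - b ^ p / t ^ (p - 1))

namespace piconeKernel

variable {p a b s t : ℝ}

lemma comm : piconeKernel p a b s t = piconeKernel p b a t s := by
  rw [piconeKernel, piconeKernel, abs_sub_comm a b, abs_sub_comm s t]
  ring

lemma nonneg_of_lt (hp : 1 ≤ p) (ha : 0 ≤ a) (hb : 0 ≤ b) (ht : 0 < t) (hts : t < s) :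
    0 ≤ piconeKernel p a b s t := by
  rw [piconeKernel, abs_rpow_sub_two_mul_self_of_pos (sub_pos.2 hts), sub_nonneg]
  exact rpow_sub_mul_sub_le_abs_sub_rpow hp ha hb ht hts

lemma nonneg (hp : 1 ≤ p) (ha : 0 ≤ a) (hb : 0 ≤ b) (hs : 0 < s) (ht : 0 < t) :
    0 ≤ piconeKernel p a b s t := by
  rcases lt_trichotomy t s with hts | rfl | hst
  · exact nonneg_of_lt hp ha hb ht hts
  · simpa [piconeKernel] using rpow_nonneg (abs_nonneg (a - b)) p
  · exact comm.trans_ge (nonneg_of_lt hp hb ha hs hst)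

end piconeKernel

theorem discrete_picone (N : ℕ) (p : ℝ) (hp : 1 < p)
    (u v : EuclideanSpace ℝ (Fin N) → ℝ)
    (hu : ∀ z, 0 ≤ u z) (hv : ∀ z, 0 < v z) (x y : EuclideanSpace ℝ (Fin N)) :
    0 ≤ |u x - u y| ^ p -
      |v x - v y| ^ (p - 2) * (v x - v y) *
        (u x ^ p / v x ^ (p - 1) - u y ^ p / v y ^ (p - 1)) :=
  piconeKernel.nonneg hp.le (hu x) (hu y) (hv x) (hv y)
end

section
/- Let f, g : Ω → [0,∞] be measurable functions on Ω ⊆ ℝ^N. Then ∫_Ω f g dx ≤ ∫_0^{μ(Ω)} f*(t) g*(t) dt, where f*, g* are the decreasing rearrangements of f and g. -/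
open MeasureTheory ENNReal

/-- The decreasing rearrangement of a nonnegative measurable function,
`f*(t) = inf { s : μ{f > s} < t }`. -/
noncomputable def decRearr {α : Type*} [MeasurableSpace α] (μ : Measure α)
    (f : α → ℝ≥0∞) (t : ℝ) : ℝ≥0∞ :=
  sInf {s : ℝ≥0∞ | μ {x | s < f x} < ENNReal.ofReal t}

/-! Writing `F x * G x = ∫∫_{a, b > 0} 1[a < F x] 1[b < G x] da db` and applying Tonelli turns
`∫ f g` into `∫∫ μ({f > a} ∩ {g > b}) da db`, and the same identity holds for `f*, g*` on the
interval `(0, μ Ω]`. So it suffices to compare the integrands: `μ({f > a} ∩ {g > b})` is at most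
`min (μ{f > a}) (μ{g > b})`, and every `t` below this minimum has `f*(t) > a` and `g*(t) > b`. -/

open Set

lemma Real.volume_Ioi_inter_ofReal_lt (r : ℝ≥0∞) :
    volume (Ioi 0 ∩ {a : ℝ | ENNReal.ofReal a < r}) = r := by
  rcases eq_or_ne r ∞ with rfl | hr
  · simp [Real.volume_Ioi]
  · have : Ioi 0 ∩ {a : ℝ | ENNReal.ofReal a < r} = Ioo 0 r.toReal := by
      ext a
      simp only [mem_inter_iff, mem_Ioi, mem_ofPred_eq, mem_Ioo, and_congr_right_iff]
      exact fun ha => ENNReal.ofReal_lt_iff_lt_toReal ha.le hr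
    rw [this, Real.volume_Ioo, sub_zero, ENNReal.ofReal_toReal hr]

section LayerCake

variable {α : Type*} [MeasurableSpace α] (ν : Measure α) [SFinite ν] {F G : α → ℝ≥0∞}

lemma lintegral_mul_eq_lintegral_setLIntegral_superlevel (hF : Measurable F)
    (hG : Measurable G) :
    ∫⁻ x, F x * G x ∂ν = ∫⁻ a in Ioi 0, ∫⁻ x in {x | ENNReal.ofReal a < F x}, G x ∂ν := by
  have hslice : ∀ x, F x * G x
      = ∫⁻ a in Ioi 0, {a : ℝ | ENNReal.ofReal a < F x}.indicator (fun _ => G x) a := by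
    intro x
    have hmeas : MeasurableSet {a : ℝ | ENNReal.ofReal a < F x} :=
      measurableSet_lt ENNReal.measurable_ofReal measurable_const
    rw [lintegral_indicator hmeas, setLIntegral_const, Measure.restrict_apply hmeas,
      inter_comm, Real.volume_Ioi_inter_ofReal_lt, mul_comm]
  have hjoint : Measurable fun p : α × ℝ =>
      {q : α × ℝ | ENNReal.ofReal q.2 < F q.1}.indicator (fun q => G q.1) p :=
    (hG.comp measurable_fst).indicator
      (measurableSet_lt (ENNReal.measurable_ofReal.comp measurable_snd) (hF.comp measurable_fst))
  simp_rw [lintegral_congr hslice, ← lintegral_indicator (measurableSet_lt measurable_const hF)]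
  exact lintegral_lintegral_swap hjoint.aemeasurable

lemma lintegral_mul_eq_lintegral_lintegral_measure_inter (hF : Measurable F)
    (hG : Measurable G) :
    ∫⁻ x, F x * G x ∂ν = ∫⁻ a in Ioi 0, ∫⁻ b in Ioi 0,
      ν ({x | ENNReal.ofReal a < F x} ∩ {x | ENNReal.ofReal b < G x}) := by
  rw [lintegral_mul_eq_lintegral_setLIntegral_superlevel ν hF hG]
  refine lintegral_congr fun a => ?_
  simpa [Measure.restrict_apply (measurableSet_lt measurable_const hG), inter_comm] using
    lintegral_mul_eq_lintegral_setLIntegral_superlevel (ν.restrict {x | ENNReal.ofReal a < F x})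
      hG measurable_one

end LayerCake

section Rearrangement

variable {α : Type*} [MeasurableSpace α] (μ : Measure α) (F : α → ℝ≥0∞)

lemma decRearr_antitone : Antitone (decRearr μ F) :=
  fun _ _ hst => sInf_le_sInf fun _ hs => hs.trans_le (ENNReal.ofReal_le_ofReal hst)

lemma measure_lt_le_of_forall_lt {c m : ℝ≥0∞} (h : ∀ s, c < s → μ {x | s < F x} ≤ m) :
    μ {x | c < F x} ≤ m := by
  rcases eq_or_ne c ∞ with rfl | hc
  · simp
  obtain ⟨u, hu_anti, hu_mem, hu_lim⟩ := exists_seq_strictAnti_tendsto' hc.lt_top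
  have hunion : {x | c < F x} = ⋃ n, {x | u n < F x} := by
    ext x
    simp only [mem_ofPred_eq, mem_iUnion]
    exact ⟨fun hx => (hu_lim.eventually (gt_mem_nhds hx)).exists,
      fun ⟨n, hn⟩ => (hu_mem n).1.trans hn⟩
  have hmono : Monotone fun n => {x | u n < F x} :=
    fun _ _ hnm _ hx => (hu_anti.antitone hnm).trans_lt hx
  rw [hunion, hmono.measure_iUnion]
  exact iSup_le fun n => h _ (hu_mem n).1

lemma lt_decRearr {c : ℝ≥0∞} {t : ℝ} (h : ENNReal.ofReal t < μ {x | c < F x}) :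
    c < decRearr μ F t := by
  by_contra! hc
  refine h.not_ge (measure_lt_le_of_forall_lt μ F fun s hs => ?_)
  obtain ⟨s₀, hs₀, hs₀s⟩ := sInf_lt_iff.mp (hc.trans_lt hs)
  exact (measure_mono fun x hx => hs₀s.trans hx).trans hs₀.le

end Rearrangement

lemma measure_inter_superlevel_le_decRearr {α : Type*} [MeasurableSpace α] (μ : Measure α)
    (f g : α → ℝ≥0∞) (a b : ℝ≥0∞) :
    μ ({x | a < f x} ∩ {x | b < g x}) ≤
      volume.restrict {t : ℝ | 0 < t ∧ ENNReal.ofReal t ≤ μ univ}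
        ({t | a < decRearr μ f t} ∩ {t | b < decRearr μ g t}) := by
  set m := min (μ {x | a < f x}) (μ {x | b < g x})
  calc μ ({x | a < f x} ∩ {x | b < g x})
      ≤ m := le_min (measure_mono inter_subset_left) (measure_mono inter_subset_right)
    _ = volume (Ioi 0 ∩ {t | ENNReal.ofReal t < m}) := (Real.volume_Ioi_inter_ofReal_lt m).symm
    _ ≤ volume (({t | a < decRearr μ f t} ∩ {t | b < decRearr μ g t}) ∩
          {t : ℝ | 0 < t ∧ ENNReal.ofReal t ≤ μ univ}) := by
      refine measure_mono fun t ⟨ht₀, htm⟩ => ?_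
      have htf : ENNReal.ofReal t < μ {x | a < f x} := htm.trans_le (min_le_left _ _)
      have htg : ENNReal.ofReal t < μ {x | b < g x} := htm.trans_le (min_le_right _ _)
      exact ⟨⟨lt_decRearr μ f htf, lt_decRearr μ g htg⟩, ht₀, htf.le.trans (measure_mono
        (subset_univ _))⟩
    _ ≤ _ := Measure.le_restrict_apply _ _

theorem hardy_littlewood_rearrangement_general (N : ℕ)
    (Ω : Set (EuclideanSpace ℝ (Fin N)))
    (f g : EuclideanSpace ℝ (Fin N) → ℝ≥0∞)
    (hf : Measurable f) (hg : Measurable g) :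
    (∫⁻ x in Ω, f x * g x) ≤
      ∫⁻ t in {t : ℝ | 0 < t ∧ ENNReal.ofReal t ≤ volume Ω},
        decRearr (volume.restrict Ω) f t * decRearr (volume.restrict Ω) g t := by
  set μ := volume.restrict Ω
  rw [lintegral_mul_eq_lintegral_lintegral_measure_inter μ hf hg,
    lintegral_mul_eq_lintegral_lintegral_measure_inter _ (decRearr_antitone μ f).measurable
      (decRearr_antitone μ g).measurable]
  refine lintegral_mono fun a => lintegral_mono fun b => ?_
  have := measure_inter_superlevel_le_decRearr μ f g (ENNReal.ofReal a) (ENNReal.ofReal b)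
  rwa [Measure.restrict_apply_univ] at this

theorem hardy_littlewood_rearrangement (N : ℕ)
    (Ω : Set (EuclideanSpace ℝ (Fin N))) (hΩ : MeasurableSet Ω)
    (f g : EuclideanSpace ℝ (Fin N) → ℝ≥0∞)
    (hf : Measurable f) (hg : Measurable g) :
    (∫⁻ x in Ω, f x * g x) ≤
      ∫⁻ t in {t : ℝ | 0 < t ∧ ENNReal.ofReal t ≤ volume Ω},
        decRearr (volume.restrict Ω) f t * decRearr (volume.restrict Ω) g t :=
  hardy_littlewood_rearrangement_general N Ω f g hf hg
end

section
/- Let u ∈ L^p(Ω) for 0 < p < ∞ and let (f_n) be a sequence bounded in L^p converging a.e. to f. Then lim_{n→∞} | ‖f_n‖_p^p − ‖f_n − f‖_p^p | exists and equals ‖f‖_p^p (Brézis–Lieb lemma, norm-to-the-p form). -/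
/-!
The whole proof rests on the elementary inequality: for every `ε > 0` there is `C_ε` with
`||a + b|^p - |a|^p| ≤ ε |a|^p + C_ε |b|^p`. By homogeneity it suffices to bound
`||t + 1|^p - |t|^p| - ε |t|^p` for real `t`; this function is continuous and negative for large
`|t|`, hence bounded above.

Applied with `a = f_n - f`, `b = f`, it gives
`||f_n|^p - |f_n - f|^p - |f|^p| ≤ ε |f_n - f|^p + (C_ε + 1) |f|^p`. Fatou puts `f` in `Lᵖ`, so the
positive part of the left side minus `ε |f_n - f|^p` tends to zero by dominated convergence, and
the remaining term has integral `O(ε)` uniformly in `n`.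
-/
open MeasureTheory Filter ENNReal Topology

namespace Real

theorem abs_rpow_mul (p x y : ℝ) : |x * y| ^ p = |x| ^ p * |y| ^ p := by
  rw [abs_mul, mul_rpow (abs_nonneg x) (abs_nonneg y)]

theorem eventually_abs_rpow_add_one_sub_le {p ε : ℝ} (hp : 0 ≤ p) (hε : 0 < ε) :
    ∀ᶠ t in cocompact ℝ, |(|t + 1| ^ p - |t| ^ p)| ≤ ε * |t| ^ p := by
  have hcont : Continuous fun s : ℝ => |1 + s| ^ p :=
    (continuous_const.add continuous_id).abs.rpow_const fun _ => Or.inr hp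
  have hnear : ∀ᶠ s in 𝓝 (0 : ℝ), |(|1 + s| ^ p - 1)| < ε := by
    have := hcont.tendsto 0
    simp only [add_zero, abs_one, one_rpow] at this
    exact (Metric.tendsto_nhds.1 this) ε hε
  rw [← Metric.cobounded_eq_cocompact]
  filter_upwards [tendsto_inv₀_cobounded.eventually hnear,
    tendsto_inv₀_cobounded'.eventually self_mem_nhdsWithin] with t ht ht0
  simp only [Set.mem_singleton_iff, inv_eq_zero] at ht0
  have hsplit : |t + 1| ^ p = |t| ^ p * |1 + t⁻¹| ^ p := by
    rw [← abs_rpow_mul, mul_add, mul_one, mul_inv_cancel₀ ht0, add_comm]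
  rw [hsplit, ← mul_sub_one, abs_mul, abs_of_nonneg (by positivity), mul_comm ε]
  exact mul_le_mul_of_nonneg_left ht.le (by positivity)

theorem exists_abs_rpow_add_one_sub_le {p ε : ℝ} (hp : 0 < p) (hε : 0 < ε) :
    ∃ C, ∀ t : ℝ, |(|t + 1| ^ p - |t| ^ p)| ≤ ε * |t| ^ p + C := by
  let F : ℝ → ℝ := fun t => |(|t + 1| ^ p - |t| ^ p)| - ε * |t| ^ p
  have hcont : Continuous F := by fun_prop (disch := exact hp.le)
  obtain ⟨t₀, ht₀⟩ := hcont.exists_forall_ge' 0 <| by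
    filter_upwards [eventually_abs_rpow_add_one_sub_le hp.le hε] with t ht
    simp only [F, zero_add, abs_zero, abs_one, one_rpow, zero_rpow hp.ne', sub_zero, mul_zero]
    linarith
  exact ⟨F t₀, fun t => by linarith [ht₀ t]⟩

theorem exists_abs_rpow_add_sub_le {p ε : ℝ} (hp : 0 < p) (hε : 0 < ε) :
    ∃ C, ∀ a b : ℝ, |(|a + b| ^ p - |a| ^ p)| ≤ ε * |a| ^ p + C * |b| ^ p := by
  obtain ⟨C, hC⟩ := exists_abs_rpow_add_one_sub_le hp hε
  refine ⟨C, fun a b => ?_⟩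
  rcases eq_or_ne b 0 with rfl | hb
  · simp only [add_zero, sub_self, abs_zero, zero_rpow hp.ne', mul_zero]
    positivity
  have ha : |a| ^ p = |a / b| ^ p * |b| ^ p := by rw [← abs_rpow_mul, div_mul_cancel₀ a hb]
  have hab : |a + b| ^ p = |a / b + 1| ^ p * |b| ^ p := by
    rw [← abs_rpow_mul, add_one_mul, div_mul_cancel₀ a hb]
  calc |(|a + b| ^ p - |a| ^ p)| = |(|a / b + 1| ^ p - |a / b| ^ p)| * |b| ^ p := by
        rw [ha, hab, ← sub_mul, abs_mul, abs_of_nonneg (by positivity : (0 : ℝ) ≤ |b| ^ p)]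
    _ ≤ (ε * |a / b| ^ p + C) * |b| ^ p := by gcongr; exact hC _
    _ = ε * |a| ^ p + C * |b| ^ p := by rw [ha]; ring

theorem exists_abs_sub_rpow_le {p : ℝ} (hp : 0 < p) :
    ∃ C, ∀ a b : ℝ, |a - b| ^ p ≤ 2 * |a| ^ p + C * |b| ^ p := by
  obtain ⟨C, hC⟩ := exists_abs_rpow_add_sub_le hp one_pos
  refine ⟨C, fun a b => ?_⟩
  have h := hC a (-b)
  rw [← sub_eq_add_neg, abs_neg] at h
  linarith [le_abs_self (|a - b| ^ p - |a| ^ p)]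

end Real

namespace MeasureTheory

variable {α : Type*} [MeasurableSpace α] {μ : Measure α}

theorem lintegral_le_of_tendsto_ae {F : ℕ → α → ℝ≥0∞} {G : α → ℝ≥0∞} {M : ℝ≥0∞}
    (hF : ∀ n, AEMeasurable (F n) μ) (hlim : ∀ᵐ x ∂μ, Tendsto (F · x) atTop (𝓝 (G x)))
    (hM : ∀ n, ∫⁻ x, F n x ∂μ ≤ M) : ∫⁻ x, G x ∂μ ≤ M :=
  calc ∫⁻ x, G x ∂μ = ∫⁻ x, liminf (F · x) atTop ∂μ :=
        lintegral_congr_ae (hlim.mono fun _ hx => hx.liminf_eq.symm)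
    _ ≤ liminf (fun n => ∫⁻ x, F n x ∂μ) atTop := lintegral_liminf_le' hF
    _ ≤ M := liminf_le_of_frequently_le' (Frequently.of_forall hM)

theorem eventually_integral_lt_add_mul {g B : ℕ → α → ℝ} {h : α → ℝ} {c δ K : ℝ}
    (hg : ∀ n, Integrable (g n) μ) (hB : ∀ n, Integrable (B n) μ) (hh : Integrable h μ)
    (hg₀ : ∀ n, 0 ≤ᵐ[μ] g n) (hB₀ : ∀ n, 0 ≤ᵐ[μ] B n) (hBK : ∀ n, ∫ x, B n x ∂μ ≤ K)
    (hlim : ∀ᵐ x ∂μ, Tendsto (g · x) atTop (𝓝 0)) (hgh : ∀ n, g n ≤ᵐ[μ] c • B n + h)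
    (hc : 0 ≤ c) (hδ : 0 < δ) :
    ∀ᶠ n in atTop, ∫ x, g n x ∂μ < δ + c * K := by
  -- `r n = (g n - c B n)⁺` lies between `0` and `g n` and is dominated by `|h|`
  let r : ℕ → α → ℝ := fun n x => max (g n x - c * B n x) 0
  have hr : ∀ n, Integrable (r n) μ := fun n =>
    ((hg n).sub ((hB n).const_mul c)).sup (integrable_zero _ _ _)
  have hr_le : ∀ n, r n ≤ᵐ[μ] g n := fun n => by
    filter_upwards [hg₀ n, hB₀ n] with x hgx hBx
    exact max_le (by simp only [Pi.zero_apply] at hBx; nlinarith) hgx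
  have hr_dom : ∀ n, ∀ᵐ x ∂μ, ‖r n x‖ ≤ |h x| := fun n => by
    filter_upwards [hgh n] with x hx
    simp only [Pi.add_apply, Pi.smul_apply, smul_eq_mul] at hx
    rw [Real.norm_of_nonneg (le_max_right _ _)]
    exact max_le (by linarith [le_abs_self (h x)]) (abs_nonneg _)
  have hr_lim : ∀ᵐ x ∂μ, Tendsto (r · x) atTop (𝓝 0) := by
    filter_upwards [hlim, ae_all_iff.2 hr_le] with x hx hrx
    exact squeeze_zero (fun n => le_max_right _ _) hrx hx
  have hr_int : Tendsto (fun n => ∫ x, r n x ∂μ) atTop (𝓝 0) := by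
    simpa using tendsto_integral_of_dominated_convergence _
      (fun n => (hr n).aestronglyMeasurable) hh.abs hr_dom hr_lim
  filter_upwards [hr_int.eventually_lt_const hδ] with n hn
  calc ∫ x, g n x ∂μ ≤ ∫ x, r n x + c * B n x ∂μ :=
        integral_mono (hg n) ((hr n).add ((hB n).const_mul c))
          fun x => by linarith [le_max_left (g n x - c * B n x) 0]
    _ = ∫ x, r n x ∂μ + c * ∫ x, B n x ∂μ := by
        rw [integral_add (hr n) ((hB n).const_mul c), integral_const_mul]
    _ < δ + c * K := add_lt_add_of_lt_of_le hn (mul_le_mul_of_nonneg_left (hBK n) hc)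

theorem tendsto_integral_of_forall_le_smul_add {g B : ℕ → α → ℝ} {K : ℝ}
    (hg : ∀ n, Integrable (g n) μ) (hB : ∀ n, Integrable (B n) μ)
    (hg₀ : ∀ n, 0 ≤ᵐ[μ] g n) (hB₀ : ∀ n, 0 ≤ᵐ[μ] B n) (hBK : ∀ n, ∫ x, B n x ∂μ ≤ K)
    (hlim : ∀ᵐ x ∂μ, Tendsto (g · x) atTop (𝓝 0))
    (hdom : ∀ ε : ℝ, 0 < ε → ∃ h : α → ℝ, Integrable h μ ∧ ∀ n, g n ≤ᵐ[μ] ε • B n + h) :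
    Tendsto (fun n => ∫ x, g n x ∂μ) atTop (𝓝 0) := by
  refine tendsto_order.2 ⟨fun a ha => Eventually.of_forall fun n =>
    ha.trans_le (integral_nonneg_of_ae (hg₀ n)), fun a ha => ?_⟩
  have hK : 0 ≤ K := (integral_nonneg_of_ae (hB₀ 0)).trans (hBK 0)
  have hε : 0 < a / (2 * (K + 1)) := by positivity
  obtain ⟨h, hh, hgh⟩ := hdom _ hε
  filter_upwards [eventually_integral_lt_add_mul hg hB hh hg₀ hB₀ hBK hlim hgh hε.le
    (half_pos ha)] with n hn
  have hεK : a / (2 * (K + 1)) * K < a / 2 := by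
    rw [div_mul_eq_mul_div, div_lt_div_iff₀ (by positivity) two_pos]
    nlinarith
  linarith

theorem tendsto_integral_abs_rpow_sub_integral_abs_sub_rpow {f : ℕ → α → ℝ} {g : α → ℝ}
    {p K : ℝ} (hp : 0 < p) (hf_meas : ∀ n, AEMeasurable (f n) μ)
    (hf : ∀ n, Integrable (fun x => |f n x| ^ p) μ) (hfK : ∀ n, ∫ x, |f n x| ^ p ∂μ ≤ K)
    (hg : Integrable (fun x => |g x| ^ p) μ)
    (hlim : ∀ᵐ x ∂μ, Tendsto (f · x) atTop (𝓝 (g x))) :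
    Tendsto (fun n => ∫ x, |f n x| ^ p ∂μ - ∫ x, |f n x - g x| ^ p ∂μ) atTop
      (𝓝 (∫ x, |g x| ^ p ∂μ)) := by
  have hg_meas : AEMeasurable g μ := aemeasurable_of_tendsto_metrizable_ae' hf_meas hlim
  obtain ⟨C₁, hC₁⟩ := Real.exists_abs_sub_rpow_le hp
  have hsub : ∀ n, Integrable (fun x => |f n x - g x| ^ p) μ := fun n =>
    Integrable.mono' (((hf n).const_mul 2).add (hg.const_mul C₁))
      (((hf_meas n).sub hg_meas).abs.pow_const p).aestronglyMeasurable
      (Eventually.of_forall fun x => by rw [Real.norm_of_nonneg (by positivity)]; exact hC₁ _ _)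
  have hsubK : ∀ n, ∫ x, |f n x - g x| ^ p ∂μ ≤ 2 * K + C₁ * ∫ x, |g x| ^ p ∂μ := fun n =>
    calc ∫ x, |f n x - g x| ^ p ∂μ ≤ ∫ x, 2 * |f n x| ^ p + C₁ * |g x| ^ p ∂μ :=
          integral_mono (hsub n) (((hf n).const_mul 2).add (hg.const_mul C₁)) fun x => hC₁ _ _
      _ = 2 * ∫ x, |f n x| ^ p ∂μ + C₁ * ∫ x, |g x| ^ p ∂μ := by
          rw [integral_add ((hf n).const_mul 2) (hg.const_mul C₁), integral_const_mul,
            integral_const_mul]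
      _ ≤ 2 * K + C₁ * ∫ x, |g x| ^ p ∂μ := by linarith [hfK n]
  have hdefect : Tendsto (fun n => ∫ x, |(|f n x| ^ p - |f n x - g x| ^ p - |g x| ^ p)| ∂μ)
      atTop (𝓝 0) := by
    refine tendsto_integral_of_forall_le_smul_add (fun n => (((hf n).sub (hsub n)).sub hg).abs)
      hsub (fun n => Eventually.of_forall fun x => abs_nonneg _)
      (fun n => Eventually.of_forall fun x => by positivity) hsubK ?_ ?_
    · filter_upwards [hlim] with x hx
      have hcont : Continuous fun y => |(|y| ^ p - |y - g x| ^ p - |g x| ^ p)| := by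
        fun_prop (disch := exact hp.le)
      simpa [Function.comp_def, Real.zero_rpow hp.ne'] using (hcont.tendsto (g x)).comp hx
    · intro ε hε
      obtain ⟨C, hC⟩ := Real.exists_abs_rpow_add_sub_le hp hε
      refine ⟨fun x => (C + 1) * |g x| ^ p, hg.const_mul _,
        fun n => Eventually.of_forall fun x => ?_⟩
      have h := hC (f n x - g x) (g x)
      rw [sub_add_cancel] at h
      simp only [Pi.add_apply, Pi.smul_apply, smul_eq_mul]
      linarith [abs_sub (|f n x| ^ p - |f n x - g x| ^ p) (|g x| ^ p),
        abs_of_nonneg (by positivity : (0 : ℝ) ≤ |g x| ^ p)]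
  rw [tendsto_iff_norm_sub_tendsto_zero]
  refine squeeze_zero (fun n => norm_nonneg _) (fun n => ?_) hdefect
  have h := norm_integral_le_integral_norm (μ := μ)
    fun x => |f n x| ^ p - |f n x - g x| ^ p - |g x| ^ p
  rwa [integral_sub (f := fun x => |f n x| ^ p - |f n x - g x| ^ p) ((hf n).sub (hsub n)) hg,
    integral_sub (hf n) (hsub n)] at h

end MeasureTheory

theorem brezis_lieb {Ω : Type*} [MeasurableSpace Ω] (μ : Measure Ω)
    (p : ℝ) (hp0 : 0 < p) (f : ℕ → Ω → ℝ) (flim : Ω → ℝ)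
    (hmeas : ∀ n, AEMeasurable (f n) μ)
    (hbdd : ∃ M : ℝ≥0∞, M ≠ ⊤ ∧ ∀ n, (∫⁻ x, ENNReal.ofReal (|f n x| ^ p) ∂μ) ≤ M)
    (hae : ∀ᵐ x ∂μ, Tendsto (fun n => f n x) atTop (nhds (flim x))) :
    Tendsto (fun n =>
        |(∫ x, |f n x| ^ p ∂μ) - ∫ x, |f n x - flim x| ^ p ∂μ|)
      atTop (nhds (∫ x, |flim x| ^ p ∂μ)) := by
  obtain ⟨M, hM_top, hM⟩ := hbdd
  have hint : ∀ {u : Ω → ℝ}, AEMeasurable u μ → ∫⁻ x, ENNReal.ofReal (|u x| ^ p) ∂μ ≤ M →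
      Integrable (fun x => |u x| ^ p) μ := fun hu huM =>
    (lintegral_ofReal_ne_top_iff_integrable (hu.abs.pow_const p).aestronglyMeasurable
      (Eventually.of_forall fun _ => by positivity)).1 (ne_top_of_le_ne_top hM_top huM)
  have hflim_M : ∫⁻ x, ENNReal.ofReal (|flim x| ^ p) ∂μ ≤ M :=
    lintegral_le_of_tendsto_ae (fun n => ((hmeas n).abs.pow_const p).ennreal_ofReal)
      (hae.mono fun x hx => ENNReal.tendsto_ofReal
        (((continuous_abs.rpow_const fun _ => Or.inr hp0.le).tendsto _).comp hx)) hM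
  have hK : ∀ n, ∫ x, |f n x| ^ p ∂μ ≤ M.toReal := fun n => by
    rw [integral_eq_lintegral_of_nonneg_ae (Eventually.of_forall fun _ => by positivity)
      ((hmeas n).abs.pow_const p).aestronglyMeasurable]
    exact toReal_mono hM_top (hM n)
  have h := (tendsto_integral_abs_rpow_sub_integral_abs_sub_rpow hp0 hmeas
    (fun n => hint (hmeas n) (hM n)) hK
    (hint (aemeasurable_of_tendsto_metrizable_ae' hmeas hae) hflim_M) hae).abs
  rwa [abs_of_nonneg (integral_nonneg fun _ => by positivity)] at h
end
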